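/- Let N ≥ 1, 1 < p < ∞, and let Ω ⊂ ℝ^N be a bounded open set. Let m : ℝ^N → ℝ be measurable and Q-periodic with mean m̄ and with 0 < m₋ ≤ m(x) ≤ m₊ < ∞ for almost every x. For a weight w that is either the function x ↦ m(x/ε) or the constant m̄, define λ₁(w) = inf { (∫_Ω |∇u|^p dx) / (∫_Ω w(x)|u(x)|^p dx) : u ∈ C¹_c(Ω), u not identically 0 }, and set μ₁ = λ₁(1) (the weight identically 1); assume μ₁ > 0. Suppose K ≥ 0 is a constant such that for every ε > 0 and every u ∈ C¹_c(Ω), |∫_Ω (m(x/ε) − m̄)|u(x)|^p dx| ≤ K ε (∫_Ω |u|^p dx)^{(p−1)/p} (∫_Ω |∇u|^p dx)^{1/p}. Then for every ε > 0, |λ₁(m(·/ε)) − λ₁(m̄)| ≤ K m₊^{1/p} m₋^{−1/p−2} μ₁^{1/p+1} ε. -/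

import Mathlib

/-!
For a test function `u` put `A = ∫ |∇u|^p` and `I = ∫ |u|^p`. The averaging estimate says that
the weighted masses `∫ m(x/ε) |u|^p` and `m̄ I` differ by at most `K ε I^{1-1/p} A^{1/p}`, so the
two Rayleigh quotients of `u` differ by at most `C ε R^{1+1/p}`, where `R` is either one of them
and `C` depends only on `m₋ ≤ m̄ ≤ m₊`. As `R ↦ R + C ε R^{1+1/p}` is monotone and continuous, this
passes to the infima: each eigenvalue is at most the other plus `C ε λ^{1+1/p}`, and the bounds
`m̄ λ₁(m̄) ≤ μ₁` and `m₋ λ₁(m(·/ε)) ≤ μ₁` turn the correction into the stated one.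
-/

open MeasureTheory

/-- The unit cube `Q = [0,1]^N` in `ℝ^N`. -/
def unitCube (N : ℕ) : Set (EuclideanSpace ℝ (Fin N)) :=
  {x | ∀ i, x i ∈ Set.Icc (0 : ℝ) 1}

/-- The variational first Dirichlet eigenvalue of the weighted `p`-Laplacian on `Ω`
with weight `w`, computed over the class `C¹_c(Ω)` of continuously differentiable
functions with compact support contained in `Ω`. -/
noncomputable def lambda1 (N : ℕ) (p : ℝ) (Ω : Set (EuclideanSpace ℝ (Fin N)))
    (w : EuclideanSpace ℝ (Fin N) → ℝ) : ℝ :=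
  sInf {r | ∃ u : EuclideanSpace ℝ (Fin N) → ℝ,
    ContDiff ℝ 1 u ∧ HasCompactSupport u ∧ tsupport u ⊆ Ω ∧ u ≠ 0 ∧
    r = (∫ x in Ω, ‖fderiv ℝ u x‖ ^ p) / (∫ x in Ω, w x * |u x| ^ p)}

open Set

/-- The comparison of the Rayleigh quotients `A / X` and `A / Y` of one function, where `A` is its
energy, `I` its `Lᵖ` mass, `X`, `Y` two weighted masses and `q = 1 / p`. -/
theorem div_le_div_add_of_sub_le {A I X Y α β D q : ℝ} (hA : 0 ≤ A) (hI : 0 < I) (hα : 0 < α)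
    (hD : 0 ≤ D) (hq : 0 ≤ q) (hX : α * I ≤ X) (hY : 0 < Y) (hYβ : Y ≤ β * I)
    (hYX : Y - X ≤ D * I ^ (1 - q) * A ^ q) :
    A / X ≤ A / Y + D / α * (β * (A / Y)) ^ q * (A / Y) := by
  have hX0 : 0 < X := (mul_pos hα hI).trans_le hX
  have hβ : 0 ≤ β := nonneg_of_mul_nonneg_left (hY.le.trans hYβ) hI
  have hYq : Y ^ q ≤ β ^ q * I ^ q := by
    rw [← Real.mul_rpow hβ hI.le]; exact Real.rpow_le_rpow hY.le hYβ hq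
  have key : α * I ^ (1 - q) * Y ^ q ≤ β ^ q * X := calc
    α * I ^ (1 - q) * Y ^ q ≤ α * I ^ (1 - q) * (β ^ q * I ^ q) := by gcongr
    _ = β ^ q * (α * I) := by
      rw [Real.rpow_sub hI, Real.rpow_one]; field_simp [(Real.rpow_pos_of_pos hI q).ne']
    _ ≤ β ^ q * X := by gcongr
  have hYq0 : 0 < Y ^ q := Real.rpow_pos_of_pos hY q
  rw [Real.mul_rpow hβ (div_nonneg hA hY.le), Real.div_rpow hA hY.le, ← sub_le_iff_le_add',
    div_sub_div _ _ hX0.ne' hY.ne', div_le_iff₀ (mul_pos hX0 hY)]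
  calc A * Y - X * A = A * (Y - X) := by ring
    _ ≤ A * (D * I ^ (1 - q) * A ^ q) := by gcongr
    _ = D * A * A ^ q / (α * Y ^ q) * (α * I ^ (1 - q) * Y ^ q) := by field_simp
    _ ≤ D * A * A ^ q / (α * Y ^ q) * (β ^ q * X) := by gcongr
    _ = D / α * (β ^ q * (A ^ q / Y ^ q)) * (A / Y) * (X * Y) := by field_simp

theorem abs_sub_le_of_le_add_mul_rpow {x y μ a b c D q : ℝ} (hq : 0 ≤ q) (hμ : 0 < μ)
    (ha : 0 < a) (hac : a ≤ c) (hcb : c ≤ b) (hD : 0 ≤ D) (hx : 0 ≤ x) (hy : 0 ≤ y)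
    (hxμ : a * x ≤ μ) (hyμ : c * y ≤ μ) (hxy : x ≤ y + D / a * (c * y) ^ q * y)
    (hyx : y ≤ x + D / c * (b * x) ^ q * x) :
    |x - y| ≤ D * b ^ q * a ^ (-q - 2) * μ ^ (q + 1) := by
  have hc : 0 ≤ c := ha.le.trans hac
  have hb : 0 ≤ b := hc.trans hcb
  have hxa : x ≤ μ / a := (le_div_iff₀' ha).2 hxμ
  have hya : y ≤ μ / a := (le_div_iff₀' ha).2 ((mul_le_mul_of_nonneg_right hac hy).trans hyμ)
  have hbound : D * b ^ q * a ^ (-q - 2) * μ ^ (q + 1) = D / a * (b * (μ / a)) ^ q * (μ / a) := by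
    rw [Real.mul_rpow hb (by positivity), Real.div_rpow hμ.le ha.le, Real.rpow_add_one hμ.ne',
      Real.rpow_sub ha, Real.rpow_neg ha.le, Real.rpow_two]
    field_simp
  rw [hbound, abs_sub_le_iff]
  constructor
  · calc x - y ≤ D / a * (c * y) ^ q * y := by linarith
      _ ≤ D / a * (b * (μ / a)) ^ q * (μ / a) := by gcongr
  · calc y - x ≤ D / c * (b * x) ^ q * x := by linarith
      _ ≤ D / a * (b * (μ / a)) ^ q * (μ / a) := by gcongr

theorem le_map_csInf_of_forall_le {α β : Type*} [ConditionallyCompleteLinearOrder α]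
    [TopologicalSpace α] [OrderTopology α] [ConditionallyCompleteLinearOrder β]
    [TopologicalSpace β] [OrderTopology β] {s : Set α} {f : α → β} {b : β}
    (hs : s.Nonempty) (hbdd : BddBelow s) (hf : MonotoneOn f s)
    (hfc : ContinuousWithinAt f s (sInf s)) (h : ∀ x ∈ s, b ≤ f x) : b ≤ f (sInf s) := by
  rw [hf.map_csInf_of_continuousWithinAt hfc hs hbdd]
  exact le_csInf (hs.image f) (forall_mem_image.2 h)

theorem volume_unitCube (N : ℕ) : volume (unitCube N) = 1 := by
  have h : unitCube N = (MeasurableEquiv.toLp 2 (Fin N → ℝ)).symm ⁻¹'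
      (univ.pi fun _ => Icc (0 : ℝ) 1) := by
    ext x
    simp only [unitCube, mem_ofPred_eq, mem_preimage, mem_univ_pi]
    rfl
  rw [h, (EuclideanSpace.volume_preserving_symm_measurableEquiv_toLp (Fin N)).measure_preimage
    (MeasurableSet.univ_pi fun _ => measurableSet_Icc).nullMeasurableSet, volume_pi_pi]
  simp [Real.volume_Icc]

instance isProbabilityMeasure_restrict_unitCube (N : ℕ) :
    IsProbabilityMeasure (volume.restrict (unitCube N)) :=
  ⟨by rw [Measure.restrict_apply_univ, volume_unitCube]⟩

theorem integral_mem_Icc_of_ae_mem_Icc {α : Type*} [MeasurableSpace α] {μ : Measure α}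
    [IsProbabilityMeasure μ] {f : α → ℝ} {a b : ℝ} (hf : AEStronglyMeasurable f μ)
    (h : ∀ᵐ x ∂μ, f x ∈ Icc a b) : ∫ x, f x ∂μ ∈ Icc a b := by
  have hfi := Integrable.of_mem_Icc a b hf.aemeasurable h
  exact ⟨by simpa using integral_mono_ae (integrable_const a) hfi (h.mono fun _ hx => hx.1),
    by simpa using integral_mono_ae hfi (integrable_const b) (h.mono fun _ hx => hx.2)⟩

namespace WeightedEigenvalue

section TestFunctions

variable {E : Type*} [MeasureSpace E]

noncomputable def mass (p : ℝ) (Ω : Set E) (u : E → ℝ) : ℝ :=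
  ∫ x in Ω, |u x| ^ p

noncomputable def weightedMass (p : ℝ) (Ω : Set E) (w u : E → ℝ) : ℝ :=
  ∫ x in Ω, w x * |u x| ^ p

theorem weightedMass_const {p c : ℝ} {Ω : Set E} {u : E → ℝ} :
    weightedMass p Ω (fun _ => c) u = c * mass p Ω u :=
  integral_const_mul c _

variable [NormedAddCommGroup E] [NormedSpace ℝ E]

structure IsTestFunction (Ω : Set E) (u : E → ℝ) : Prop where
  contDiff : ContDiff ℝ 1 u
  hasCompactSupport : HasCompactSupport u
  tsupport_subset : tsupport u ⊆ Ω
  ne_zero : u ≠ 0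

noncomputable def energy (p : ℝ) (Ω : Set E) (u : E → ℝ) : ℝ :=
  ∫ x in Ω, ‖fderiv ℝ u x‖ ^ p

noncomputable def rayleighQuotient (p : ℝ) (Ω : Set E) (w u : E → ℝ) : ℝ :=
  energy p Ω u / weightedMass p Ω w u

variable {p a b c : ℝ} {Ω : Set E} {u w : E → ℝ}

theorem energy_nonneg : 0 ≤ energy p Ω u :=
  integral_nonneg fun _ => Real.rpow_nonneg (norm_nonneg _) p

section Integrals

variable [BorelSpace E] [IsFiniteMeasureOnCompacts (volume : Measure E)]

theorem IsTestFunction.integrable_abs_rpow (hu : IsTestFunction Ω u) (hp : 0 < p) :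
    Integrable fun x => |u x| ^ p :=
  ((continuous_abs.comp hu.contDiff.continuous).rpow_const fun _ => Or.inr hp.le)
    |>.integrable_of_hasCompactSupport
      (hu.hasCompactSupport.comp_left (g := fun z : ℝ => |z| ^ p) (by simp [Real.zero_rpow hp.ne']))

theorem IsTestFunction.mass_pos [(volume : Measure E).IsOpenPosMeasure]
    (hu : IsTestFunction Ω u) (hp : 0 < p) : 0 < mass p Ω u := by
  have hsupp : Function.support (fun x => |u x| ^ p) = Function.support u := by
    ext x
    simp [Real.rpow_eq_zero_iff_of_nonneg (abs_nonneg _), hp.ne']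
  rw [mass, setIntegral_pos_iff_support_of_nonneg_ae
    (.of_forall fun x => Real.rpow_nonneg (abs_nonneg _) p)
    (hu.integrable_abs_rpow hp).integrableOn, hsupp, inter_eq_self_of_subset_left (subset_tsupport u |>.trans hu.tsupport_subset)]
  exact hu.contDiff.continuous.isOpen_support.measure_pos volume
    (Function.support_nonempty_iff.2 hu.ne_zero)

theorem IsTestFunction.integrableOn_mul_abs_rpow (hu : IsTestFunction Ω u) (hp : 0 < p)
    (hw : AEStronglyMeasurable w (volume.restrict Ω))
    (hwb : ∀ᵐ x ∂volume.restrict Ω, w x ∈ Icc a b) :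
    IntegrableOn (fun x => w x * |u x| ^ p) Ω :=
  (hu.integrable_abs_rpow hp).integrableOn.bdd_mul hw
    (hwb.mono fun _ hx => abs_le_max_abs_abs hx.1 hx.2)

theorem IsTestFunction.weightedMass_mem_Icc (hu : IsTestFunction Ω u) (hp : 0 < p)
    (hw : AEStronglyMeasurable w (volume.restrict Ω))
    (hwb : ∀ᵐ x ∂volume.restrict Ω, w x ∈ Icc a b) :
    weightedMass p Ω w u ∈ Icc (a * mass p Ω u) (b * mass p Ω u) := by
  have hwu := hu.integrableOn_mul_abs_rpow hp hw hwb
  have hI := (hu.integrable_abs_rpow hp).integrableOn (s := Ω)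
  rw [mass, ← integral_const_mul, ← integral_const_mul]
  exact ⟨integral_mono_ae (hI.const_mul a) hwu (hwb.mono fun x hx =>
      mul_le_mul_of_nonneg_right hx.1 (Real.rpow_nonneg (abs_nonneg _) p)),
    integral_mono_ae hwu (hI.const_mul b) (hwb.mono fun x hx =>
      mul_le_mul_of_nonneg_right hx.2 (Real.rpow_nonneg (abs_nonneg _) p))⟩

theorem IsTestFunction.setIntegral_sub_mul_abs_rpow (hu : IsTestFunction Ω u) (hp : 0 < p)
    (hw : AEStronglyMeasurable w (volume.restrict Ω))
    (hwb : ∀ᵐ x ∂volume.restrict Ω, w x ∈ Icc a b) :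
    ∫ x in Ω, (w x - c) * |u x| ^ p = weightedMass p Ω w u - c * mass p Ω u := by
  simp only [sub_mul]
  rw [integral_sub (hu.integrableOn_mul_abs_rpow hp hw hwb)
    ((hu.integrable_abs_rpow hp).integrableOn.const_mul c), integral_const_mul]
  rfl

end Integrals

end TestFunctions

section FirstEigenvalue

variable {N : ℕ} {p α β D : ℝ} {Ω : Set (EuclideanSpace ℝ (Fin N))}
  {w v : EuclideanSpace ℝ (Fin N) → ℝ}

theorem lambda1_eq_sInf_image :
    lambda1 N p Ω w = sInf (rayleighQuotient p Ω w '' {u | IsTestFunction Ω u}) := by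
  refine congrArg sInf (ext fun r => ⟨?_, ?_⟩)
  · rintro ⟨u, h1, h2, h3, h4, rfl⟩
    exact ⟨u, ⟨h1, h2, h3, h4⟩, rfl⟩
  · rintro ⟨u, ⟨h1, h2, h3, h4⟩, rfl⟩
    exact ⟨u, h1, h2, h3, h4, rfl⟩

theorem rayleighQuotient_image_subset_Ici
    (hw : ∀ u, IsTestFunction Ω u → 0 ≤ weightedMass p Ω w u) :
    rayleighQuotient p Ω w '' {u | IsTestFunction Ω u} ⊆ Ici 0 := by
  rintro _ ⟨u, hu, rfl⟩
  exact div_nonneg energy_nonneg (hw u hu)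

theorem lambda1_nonneg (hw : ∀ u, IsTestFunction Ω u → 0 ≤ weightedMass p Ω w u) :
    0 ≤ lambda1 N p Ω w :=
  lambda1_eq_sInf_image ▸ Real.sInf_nonneg (rayleighQuotient_image_subset_Ici hw)

theorem lambda1_le_rayleighQuotient (hw : ∀ u, IsTestFunction Ω u → 0 ≤ weightedMass p Ω w u)
    {u : EuclideanSpace ℝ (Fin N) → ℝ} (hu : IsTestFunction Ω u) :
    lambda1 N p Ω w ≤ rayleighQuotient p Ω w u :=
  lambda1_eq_sInf_image ▸
    csInf_le (bddBelow_Ici.mono (rayleighQuotient_image_subset_Ici hw)) ⟨u, hu, rfl⟩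

theorem exists_isTestFunction_of_lambda1_ne_zero (h : lambda1 N p Ω w ≠ 0) :
    ∃ u, IsTestFunction Ω u := by
  by_contra! hno
  -- `sInf ∅ = 0` in `ℝ`
  simp [lambda1_eq_sInf_image, hno] at h

theorem mul_lambda1_le_lambda1_one (hp : 0 < p) (hα : 0 < α) (hne : ∃ u, IsTestFunction Ω u)
    (hw : ∀ u, IsTestFunction Ω u → α * mass p Ω u ≤ weightedMass p Ω w u) :
    α * lambda1 N p Ω w ≤ lambda1 N p Ω (fun _ => 1) := by
  have hw0 u (hu : IsTestFunction Ω u) : 0 ≤ weightedMass p Ω w u :=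
    (mul_pos hα (hu.mass_pos hp)).le.trans (hw u hu)
  rw [lambda1_eq_sInf_image (w := fun _ => 1)]
  refine le_csInf (Set.Nonempty.image _ hne) (forall_mem_image.2 fun u hu => ?_)
  have hI := hu.mass_pos hp
  calc α * lambda1 N p Ω w ≤ α * (energy p Ω u / (α * mass p Ω u)) := by
        gcongr
        exact (lambda1_le_rayleighQuotient hw0 hu).trans
          (div_le_div_of_nonneg_left energy_nonneg (by positivity) (hw u hu))
    _ = rayleighQuotient p Ω (fun _ => 1) u := by
        rw [rayleighQuotient, weightedMass_const, one_mul]; field_simp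

theorem lambda1_le_lambda1_add (hp : 0 < p) (hα : 0 < α) (hD : 0 ≤ D)
    (hne : ∃ u, IsTestFunction Ω u)
    (hw : ∀ u, IsTestFunction Ω u → α * mass p Ω u ≤ weightedMass p Ω w u)
    (hv : ∀ u, IsTestFunction Ω u →
      0 < weightedMass p Ω v u ∧ weightedMass p Ω v u ≤ β * mass p Ω u)
    (hvw : ∀ u, IsTestFunction Ω u → weightedMass p Ω v u - weightedMass p Ω w u ≤
      D * mass p Ω u ^ (1 - 1 / p) * energy p Ω u ^ (1 / p)) :
    lambda1 N p Ω w ≤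
      lambda1 N p Ω v + D / α * (β * lambda1 N p Ω v) ^ (1 / p) * lambda1 N p Ω v := by
  have hw0 u (hu : IsTestFunction Ω u) : 0 ≤ weightedMass p Ω w u :=
    (mul_pos hα (hu.mass_pos hp)).le.trans (hw u hu)
  have hv0 u (hu : IsTestFunction Ω u) : 0 ≤ weightedMass p Ω v u := (hv u hu).1.le
  obtain ⟨u₀, hu₀⟩ := hne
  have hβ : 0 ≤ β := nonneg_of_mul_nonneg_left ((hv0 u₀ hu₀).trans (hv u₀ hu₀).2)
    (hu₀.mass_pos hp)
  have hsub := rayleighQuotient_image_subset_Ici hv0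
  rw [lambda1_eq_sInf_image (w := v)]
  have hcont : Continuous fun t : ℝ => t + D / α * (β * t) ^ (1 / p) * t := by
    have := Real.continuous_rpow_const (q := 1 / p) (by positivity)
    fun_prop
  refine le_map_csInf_of_forall_le (Set.Nonempty.image _ ⟨u₀, hu₀⟩) (bddBelow_Ici.mono hsub)
    (fun s hs t ht hst => by have : 0 ≤ s := hsub hs; have : 0 ≤ t := hsub ht; gcongr)
    hcont.continuousWithinAt (forall_mem_image.2 fun u hu => ?_)
  exact (lambda1_le_rayleighQuotient hw0 hu).trans <| div_le_div_add_of_sub_le energy_nonneg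
    (hu.mass_pos hp) hα hD (by positivity) (hw u hu) (hv u hu).1 (hv u hu).2 (hvw u hu)

theorem abs_lambda1_sub_lambda1_const_le {a b c : ℝ} (hp : 0 < p) (ha : 0 < a) (hac : a ≤ c)
    (hcb : c ≤ b) (hD : 0 ≤ D) (hμ : 0 < lambda1 N p Ω (fun _ => 1))
    (hw : AEStronglyMeasurable w (volume.restrict Ω))
    (hwb : ∀ᵐ x ∂volume.restrict Ω, w x ∈ Icc a b)
    (hwc : ∀ u, IsTestFunction Ω u → |∫ x in Ω, (w x - c) * |u x| ^ p| ≤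
      D * (∫ x in Ω, |u x| ^ p) ^ ((p - 1) / p) * (∫ x in Ω, ‖fderiv ℝ u x‖ ^ p) ^ (1 / p)) :
    |lambda1 N p Ω w - lambda1 N p Ω (fun _ => c)| ≤
      D * b ^ (1 / p) * a ^ (-(1 / p) - 2) * lambda1 N p Ω (fun _ => 1) ^ (1 / p + 1) := by
  have hne := exists_isTestFunction_of_lambda1_ne_zero hμ.ne'
  have hc : 0 < c := ha.trans_le hac
  have hW u (hu : IsTestFunction Ω u) := hu.weightedMass_mem_Icc hp hw hwb
  have hWc u (hu : IsTestFunction Ω u) : c * mass p Ω u ≤ weightedMass p Ω (fun _ => c) u :=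
    weightedMass_const.ge
  have hdiff u (hu : IsTestFunction Ω u) : |weightedMass p Ω w u - c * mass p Ω u| ≤
      D * mass p Ω u ^ (1 - 1 / p) * energy p Ω u ^ (1 / p) := by
    rw [← hu.setIntegral_sub_mul_abs_rpow hp hw hwb, one_sub_div hp.ne']
    exact hwc u hu
  refine abs_sub_le_of_le_add_mul_rpow (by positivity) hμ ha hac hcb hD
    (lambda1_nonneg fun u hu => (mul_pos ha (hu.mass_pos hp)).le.trans (hW u hu).1)
    (lambda1_nonneg fun u hu => (mul_pos hc (hu.mass_pos hp)).le.trans (hWc u hu))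
    (mul_lambda1_le_lambda1_one hp ha hne fun u hu => (hW u hu).1)
    (mul_lambda1_le_lambda1_one hp hc hne hWc) ?_ ?_
  · exact lambda1_le_lambda1_add hp ha hD hne (fun u hu => (hW u hu).1)
      (fun u hu => by rw [weightedMass_const]; exact ⟨mul_pos hc (hu.mass_pos hp), le_rfl⟩)
      (fun u hu => by rw [weightedMass_const, ← neg_sub]; exact (neg_le_abs _).trans (hdiff u hu))
  · exact lambda1_le_lambda1_add hp hc hD hne hWc
      (fun u hu => ⟨(mul_pos ha (hu.mass_pos hp)).trans_le (hW u hu).1, (hW u hu).2⟩)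
      (fun u hu => by rw [weightedMass_const]; exact (le_abs_self _).trans (hdiff u hu))

end FirstEigenvalue

end WeightedEigenvalue

theorem eigenvalue_convergence_rate_general
    (N : ℕ) (p : ℝ) (hp : 1 < p)
    (Ω : Set (EuclideanSpace ℝ (Fin N)))
    (m : EuclideanSpace ℝ (Fin N) → ℝ) (hmm : Measurable m)
    (mbar : ℝ) (hmbar : mbar = ∫ y in unitCube N, m y)
    (mminus mplus : ℝ) (hmminus : 0 < mminus)
    (hbd : ∀ᵐ x : EuclideanSpace ℝ (Fin N), mminus ≤ m x ∧ m x ≤ mplus)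
    (hmu : 0 < lambda1 N p Ω (fun _ => 1))
    (K : ℝ) (hK : 0 ≤ K)
    (hest : ∀ ε > (0 : ℝ), ∀ u : EuclideanSpace ℝ (Fin N) → ℝ,
      ContDiff ℝ 1 u → HasCompactSupport u → tsupport u ⊆ Ω →
      |∫ x in Ω, (m (ε⁻¹ • x) - mbar) * |u x| ^ p| ≤
        K * ε * (∫ x in Ω, |u x| ^ p) ^ ((p - 1) / p) *
          (∫ x in Ω, ‖fderiv ℝ u x‖ ^ p) ^ (1 / p)) :
    ∀ ε > (0 : ℝ),
      |lambda1 N p Ω (fun x => m (ε⁻¹ • x)) - lambda1 N p Ω (fun _ => mbar)| ≤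
        K * mplus ^ (1 / p) * mminus ^ (-(1 / p) - 2) *
          (lambda1 N p Ω (fun _ => 1)) ^ (1 / p + 1) * ε := by
  intro ε hε
  have hmbar_mem : mbar ∈ Icc mminus mplus :=
    hmbar ▸ integral_mem_Icc_of_ae_mem_Icc hmm.aestronglyMeasurable (ae_restrict_of_ae hbd)
  have hbdε : ∀ᵐ x ∂volume.restrict Ω, m (ε⁻¹ • x) ∈ Icc mminus mplus :=
    ae_restrict_of_ae ((Measure.quasiMeasurePreserving_smul volume (inv_ne_zero hε.ne')).ae hbd)
  calc _ ≤ K * ε * mplus ^ (1 / p) * mminus ^ (-(1 / p) - 2) *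
        lambda1 N p Ω (fun _ => 1) ^ (1 / p + 1) :=
      WeightedEigenvalue.abs_lambda1_sub_lambda1_const_le (by linarith) hmminus hmbar_mem.1
        hmbar_mem.2 (by positivity) hmu (hmm.comp (measurable_const_smul ε⁻¹)).aestronglyMeasurable
        hbdε fun u hu => hest ε hε u hu.contDiff hu.hasCompactSupport hu.tsupport_subset
    _ = _ := by ring

/-- Theorem 2.2 of the paper: rate of convergence of the first Dirichlet
eigenvalue under periodic homogenization of the weight:
`|λ₁(m(·/ε)) − λ₁(m̄)| ≤ K m₊^{1/p} m₋^{−1/p−2} μ₁^{1/p+1} ε`. -/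
theorem eigenvalue_convergence_rate
    (N : ℕ) (hN : 1 ≤ N) (p : ℝ) (hp : 1 < p)
    (Ω : Set (EuclideanSpace ℝ (Fin N))) (hΩo : IsOpen Ω)
    (hΩb : Bornology.IsBounded Ω)
    (m : EuclideanSpace ℝ (Fin N) → ℝ) (hmm : Measurable m)
    (hper : ∀ (x : EuclideanSpace ℝ (Fin N)) (z : Fin N → ℤ),
      m (x + (show EuclideanSpace ℝ (Fin N) from WithLp.toLp 2 fun i => (z i : ℝ))) = m x)
    (mbar : ℝ) (hmbar : mbar = ∫ y in unitCube N, m y)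
    (mminus mplus : ℝ) (hmminus : 0 < mminus)
    (hbd : ∀ᵐ x : EuclideanSpace ℝ (Fin N), mminus ≤ m x ∧ m x ≤ mplus)
    (hmu : 0 < lambda1 N p Ω (fun _ => 1))
    (K : ℝ) (hK : 0 ≤ K)
    (hest : ∀ ε > (0 : ℝ), ∀ u : EuclideanSpace ℝ (Fin N) → ℝ,
      ContDiff ℝ 1 u → HasCompactSupport u → tsupport u ⊆ Ω →
      |∫ x in Ω, (m (ε⁻¹ • x) - mbar) * |u x| ^ p| ≤
        K * ε * (∫ x in Ω, |u x| ^ p) ^ ((p - 1) / p) *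
          (∫ x in Ω, ‖fderiv ℝ u x‖ ^ p) ^ (1 / p)) :
    ∀ ε > (0 : ℝ),
      |lambda1 N p Ω (fun x => m (ε⁻¹ • x)) - lambda1 N p Ω (fun _ => mbar)| ≤
        K * mplus ^ (1 / p) * mminus ^ (-(1 / p) - 2) *
          (lambda1 N p Ω (fun _ => 1)) ^ (1 / p + 1) * ε :=
  eigenvalue_convergence_rate_general N p hp Ω m hmm mbar hmbar mminus mplus hmminus hbd hmu K hK
    hest
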